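/- arXiv:2303.03263 — 2 statements merged into one kernel-verified Lean document; each statement's English description precedes it below -/
import Mathlib

section
/- Let P = {x ∈ ℝ² : x₁ ≥ −1, x₂ ≥ −1}, λ ∈ (0,1), and let v, w : P → ℝ satisfy v(x) = q₁(x) e^{−(x₁+x₂)} and w(x) = q₂(x) e^{−λ(x₁+x₂)} where q₁, q₂ are positive continuous functions bounded above and below by positive constants times polynomials. For R > 0 define f_R(x) = max(x₁ + x₂ − R, 0). Then there exists R₀ such that for all R ≥ R₀, 2∫_{∂P} f_R v dσ − ∫_P f_R w dx < 0. -/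
open MeasureTheory Filter Set

open MeasureTheory Filter Set

lemma aux_tendsto (n : ℕ) (a : ℝ) {c : ℝ} (hc : 0 < c) :
    Tendsto (fun t : ℝ => (a + t) ^ n * Real.exp (-(c * t))) atTop (nhds 0) := by
  have h1 : Tendsto (fun s : ℝ => s ^ n * Real.exp (-s)) atTop (nhds 0) :=
    Real.tendsto_pow_mul_exp_neg_atTop_nhds_zero n
  have h2 : Tendsto (fun t : ℝ => c * t) atTop atTop := tendsto_id.const_mul_atTop hc
  have h3 : Tendsto (fun t : ℝ => (c * t) ^ n * Real.exp (-(c * t))) atTop (nhds 0) := h1.comp h2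
  have h4 : Tendsto (fun t : ℝ => (2 / c) ^ n * ((c * t) ^ n * Real.exp (-(c * t)))) atTop
      (nhds 0) := by simpa using h3.const_mul ((2 / c) ^ n)
  refine squeeze_zero' ?_ ?_ h4
  · filter_upwards [eventually_ge_atTop (|a|)] with t ht
    have : (0:ℝ) ≤ a + t := by
      have := neg_abs_le a; linarith
    positivity
  · filter_upwards [eventually_ge_atTop (|a|), eventually_ge_atTop (0:ℝ)] with t ht ht0
    have ha : a + t ≤ 2 * t := by have := le_abs_self a; linarith
    have h0 : (0:ℝ) ≤ a + t := by have := neg_abs_le a; linarith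
    have : (a + t) ^ n ≤ (2 * t) ^ n := pow_le_pow_left₀ h0 ha n
    have heq : (2 / c) ^ n * (c * t) ^ n = (2 * t) ^ n := by
      rw [← mul_pow]; congr 1; field_simp
    calc (a + t) ^ n * Real.exp (-(c * t)) ≤ (2 * t) ^ n * Real.exp (-(c * t)) := by
          exact mul_le_mul_of_nonneg_right this (Real.exp_pos _).le
      _ = (2 / c) ^ n * ((c * t) ^ n * Real.exp (-(c * t))) := by rw [← mul_assoc, heq]

lemma aux_integrable (n : ℕ) (a b : ℝ) {c : ℝ} (hc : 0 < c) :
    IntegrableOn (fun t : ℝ => (a + t) ^ n * Real.exp (-(c * t))) (Set.Ioi b) := by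
  apply integrable_of_isBigO_exp_neg (half_pos hc) (Continuous.continuousOn (by continuity))
  rw [Asymptotics.isBigO_iff]
  refine ⟨1, ?_⟩
  have h := (aux_tendsto n a (half_pos hc)).eventually_lt_const (zero_lt_one)
  filter_upwards [h, eventually_ge_atTop (-a)] with t ht hta
  have h0 : (0:ℝ) ≤ a + t := by linarith
  have hsplit : Real.exp (-(c * t)) = Real.exp (-(c / 2 * t)) * Real.exp (-(c / 2 * t)) := by
    rw [← Real.exp_add]; ring_nf
  rw [Real.norm_eq_abs, Real.norm_eq_abs, abs_of_nonneg (by positivity),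
    abs_of_nonneg (Real.exp_pos _).le, hsplit, ← mul_assoc, one_mul]
  have := mul_le_mul_of_nonneg_right ht.le (Real.exp_pos (-(c / 2 * t))).le
  simpa [neg_mul] using this

lemma boundary_bound (C : ℝ) (d : ℕ) (φ : ℝ → ℝ)
    (hφm : AEStronglyMeasurable φ (volume.restrict (Set.Ici (-1 : ℝ))))
    (hφ0 : ∀ t ∈ Set.Ici (-1 : ℝ), 0 ≤ φ t)
    (hφb : ∀ t ∈ Set.Ici (-1 : ℝ), φ t ≤ C * (3 + t) ^ d)
    {mu : ℝ} (hμ0 : 0 < mu) (hμ1 : mu < 1) :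
    ∃ K : ℝ, ∀ R ≥ (0 : ℝ),
      (∫ t in Set.Ici (-1 : ℝ), max (t - 1 - R) 0 * (φ t * Real.exp (1 - t)))
        ≤ K * Real.exp (-(mu * R)) := by
  have h1mu : 0 < 1 - mu := by linarith
  set F : ℝ → ℝ := fun t =>
    C * Real.exp 1 * ((3 + t) ^ (d + 1) * Real.exp (-((1 - mu) * t))) with hF
  have hFint : IntegrableOn F (Set.Ioi (-1 : ℝ)) :=
    (aux_integrable (d + 1) 3 (-1) h1mu).const_mul _
  refine ⟨∫ t in Set.Ioi (-1 : ℝ), F t, fun R hR => ?_⟩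
  have hsub : Set.Ioi (R + 1) ⊆ Set.Ici (-1 : ℝ) := fun t ht => by
    have := mem_Ioi.mp ht; exact mem_Ici.mpr (by linarith)
  have hsub' : Set.Ioi (R + 1) ⊆ Set.Ioi (-1 : ℝ) := fun t ht => by
    have := mem_Ioi.mp ht; exact mem_Ioi.mpr (by linarith)
  set g : ℝ → ℝ := fun t => max (t - 1 - R) 0 * (φ t * Real.exp (1 - t)) with hg
  have hgnn : ∀ t ∈ Set.Ici (-1 : ℝ), 0 ≤ g t := fun t ht =>
    mul_nonneg (le_max_right _ _) (mul_nonneg (hφ0 t ht) (Real.exp_pos _).le)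
  have heq : ∫ t in Set.Ici (-1 : ℝ), g t = ∫ t in Set.Ioi (R + 1), g t := by
    refine setIntegral_eq_of_subset_of_forall_diff_eq_zero measurableSet_Ici hsub ?_
    intro t ht
    obtain ⟨ht1, ht2⟩ := ht
    have h2 : t ≤ R + 1 := not_lt.mp (by simpa using ht2)
    have : max (t - 1 - R) 0 = 0 := max_eq_right (by linarith)
    simp [hg, this]
  have hDbound : ∀ t ∈ Set.Ioi (R + 1), g t ≤ F t * Real.exp (-(mu * R)) := by
    intro t ht
    have ht' : R + 1 < t := mem_Ioi.mp ht
    have ht0 : (0:ℝ) < t := by linarith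
    have h3 : Real.exp (1 - t)
        = Real.exp 1 * Real.exp (-((1 - mu) * t)) * Real.exp (-(mu * t)) := by
      rw [← Real.exp_add, ← Real.exp_add]; congr 1; ring
    have hφt := hφb t (hsub ht)
    have hφ0t := hφ0 t (hsub ht)
    have h3t : (0:ℝ) < 3 + t := by linarith
    have hCnn : 0 ≤ C := by
      have h1 := hφb (-1) (mem_Ici.mpr le_rfl)
      have h0 := hφ0 (-1) (mem_Ici.mpr le_rfl)
      have h2 : (0:ℝ) < (3 + (-1:ℝ)) ^ d := by norm_num
      nlinarith
    calc g t = max (t - 1 - R) 0 *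
          (φ t * (Real.exp 1 * Real.exp (-((1 - mu) * t)) * Real.exp (-(mu * t)))) := by
          rw [hg]; dsimp only; rw [h3]
      _ ≤ (3 + t) * ((C * (3 + t) ^ d) *
            (Real.exp 1 * Real.exp (-((1 - mu) * t)) * Real.exp (-(mu * R)))) := by
          have hmax : max (t - 1 - R) 0 ≤ 3 + t := max_le (by linarith) (by linarith)
          have hexp : Real.exp (-(mu * t)) ≤ Real.exp (-(mu * R)) :=
            Real.exp_le_exp.mpr (by nlinarith)
          apply mul_le_mul hmax _ (mul_nonneg hφ0t (by positivity)) (by positivity)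
          exact mul_le_mul hφt
            (mul_le_mul_of_nonneg_left hexp (by positivity)) (by positivity) (by positivity)
      _ = F t * Real.exp (-(mu * R)) := by rw [hF]; ring
  have hgm : AEStronglyMeasurable g (volume.restrict (Set.Ioi (R + 1))) := by
    have h1 : AEStronglyMeasurable φ (volume.restrict (Set.Ioi (R + 1))) :=
      hφm.mono_measure (Measure.restrict_mono hsub le_rfl)
    exact ((Continuous.aestronglyMeasurable (by continuity :
        Continuous fun t : ℝ => max (t - 1 - R) 0))).mul
      (h1.mul (Real.continuous_exp.comp (by continuity)).aestronglyMeasurable)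
  have hFR : IntegrableOn (fun t => F t * Real.exp (-(mu * R))) (Set.Ioi (R + 1)) :=
    (hFint.mono_set hsub').mul_const _
  have hgint : IntegrableOn g (Set.Ioi (R + 1)) := by
    refine Integrable.mono hFR hgm ?_
    refine (ae_restrict_iff' measurableSet_Ioi).mpr (ae_of_all _ fun t ht => ?_)
    rw [Real.norm_eq_abs, Real.norm_eq_abs, abs_of_nonneg (hgnn t (hsub ht))]
    exact le_trans (hDbound t ht) (le_abs_self _)
  have step1 : ∫ t in Set.Ioi (R + 1), g t
      ≤ ∫ t in Set.Ioi (R + 1), F t * Real.exp (-(mu * R)) :=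
    setIntegral_mono_on hgint hFR measurableSet_Ioi hDbound
  have step2 : ∫ t in Set.Ioi (R + 1), F t * Real.exp (-(mu * R))
      = (∫ t in Set.Ioi (R + 1), F t) * Real.exp (-(mu * R)) := integral_mul_const _ _
  have hCnn : 0 ≤ C := by
    have h1 := hφb (-1) (mem_Ici.mpr le_rfl)
    have h0 := hφ0 (-1) (mem_Ici.mpr le_rfl)
    have h2 : (0:ℝ) < (3 + (-1:ℝ)) ^ d := by norm_num
    nlinarith
  have hFnn : 0 ≤ᵐ[volume.restrict (Set.Ioi (-1:ℝ))] F := by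
    refine (ae_restrict_iff' measurableSet_Ioi).mpr (ae_of_all _ fun t ht => ?_)
    have : (-1:ℝ) < t := mem_Ioi.mp ht
    have h3t : (0:ℝ) < 3 + t := by linarith
    rw [hF]; positivity
  have step3 : ∫ t in Set.Ioi (R + 1), F t ≤ ∫ t in Set.Ioi (-1:ℝ), F t :=
    setIntegral_mono_set hFint hFnn (HasSubset.Subset.eventuallyLE hsub')
  calc ∫ t in Set.Ici (-1 : ℝ), g t = ∫ t in Set.Ioi (R + 1), g t := heq
    _ ≤ (∫ t in Set.Ioi (R + 1), F t) * Real.exp (-(mu * R)) := by rw [← step2]; exact step1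
    _ ≤ (∫ t in Set.Ioi (-1:ℝ), F t) * Real.exp (-(mu * R)) :=
        mul_le_mul_of_nonneg_right step3 (Real.exp_pos _).le

lemma interior_bound (lam C : ℝ) (hl0 : 0 < lam) (hC : 0 < C) (d : ℕ) (ψ : ℝ × ℝ → ℝ)
    (hm : AEStronglyMeasurable ψ
      (volume.restrict (Set.Ici (-1 : ℝ) ×ˢ Set.Ici (-1 : ℝ))))
    (hlow : ∀ x ∈ Set.Ici (-1 : ℝ) ×ˢ Set.Ici (-1 : ℝ),
      (C⁻¹ * (1 + ‖x‖) ^ (d : ℝ))⁻¹ ≤ ψ x)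
    (hupp : ∀ x ∈ Set.Ici (-1 : ℝ) ×ˢ Set.Ici (-1 : ℝ), ψ x ≤ C * (1 + ‖x‖) ^ (d : ℝ)) :
    ∀ R ≥ (0 : ℝ), C * ((R + 3) ^ d)⁻¹ * Real.exp (-(lam * (R + 3)))
      ≤ ∫ x in Set.Ici (-1 : ℝ) ×ˢ Set.Ici (-1 : ℝ),
          max (x.1 + x.2 - R) 0 * (ψ x * Real.exp (-lam * (x.1 + x.2))) := by
  intro R hR
  set P : Set (ℝ × ℝ) := Set.Ici (-1 : ℝ) ×ˢ Set.Ici (-1 : ℝ) with hP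
  have hPm : MeasurableSet P := measurableSet_Ici.prod measurableSet_Ici
  set f : ℝ × ℝ → ℝ :=
    fun x => max (x.1 + x.2 - R) 0 * (ψ x * Real.exp (-lam * (x.1 + x.2))) with hf
  -- basic facts
  have hnorm : ∀ x : ℝ × ℝ, ‖x‖ = max |x.1| |x.2| := fun x => by
    rw [Prod.norm_def, Real.norm_eq_abs, Real.norm_eq_abs]
  have hψ0 : ∀ x ∈ P, 0 ≤ ψ x := by
    intro x hx
    refine le_trans ?_ (hlow x hx)
    positivity
  have hfnn : ∀ x ∈ P, 0 ≤ f x := fun x hx =>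
    mul_nonneg (le_max_right _ _) (mul_nonneg (hψ0 x hx) (Real.exp_pos _).le)
  -- integrability of f on P
  have h1d : IntegrableOn (fun t : ℝ => (3 + t) ^ (d + 1) * Real.exp (-(lam * t)))
      (Set.Ici (-1 : ℝ)) :=
    (integrableOn_Ici_iff_integrableOn_Ioi enorm_ne_top).mpr (aux_integrable (d + 1) 3 (-1) hl0)
  set G : ℝ × ℝ → ℝ := fun x =>
    (C * (1 + |R|) * ((3 + x.1) ^ (d + 1) * Real.exp (-(lam * x.1)))) *
      ((3 + x.2) ^ (d + 1) * Real.exp (-(lam * x.2))) with hG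
  have hGint : IntegrableOn G P := by
    rw [hP, IntegrableOn, Measure.volume_eq_prod, ← Measure.prod_restrict]
    exact (h1d.const_mul (C * (1 + |R|))).mul_prod h1d
  have hfm : AEStronglyMeasurable f (volume.restrict P) := by
    refine ((Continuous.aestronglyMeasurable (by fun_prop :
        Continuous fun x : ℝ × ℝ => max (x.1 + x.2 - R) 0))).mul
      (hm.mul (Continuous.aestronglyMeasurable (by fun_prop :
        Continuous fun x : ℝ × ℝ => Real.exp (-lam * (x.1 + x.2)))))
  have hdom : ∀ x ∈ P, f x ≤ G x := by
    intro x hx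
    obtain ⟨ha, hb⟩ := hx
    have ha : (-1:ℝ) ≤ x.1 := ha
    have hb : (-1:ℝ) ≤ x.2 := hb
    have ha3 : (0:ℝ) < 3 + x.1 := by linarith
    have hb3 : (0:ℝ) < 3 + x.2 := by linarith
    have habs : |R| = R := abs_of_nonneg hR
    have hn1 : 1 + ‖x‖ ≤ (3 + x.1) * (3 + x.2) := by
      rw [hnorm]
      have h1 : |x.1| ≤ x.1 + 2 := abs_le.mpr ⟨by linarith, by linarith⟩
      have h2 : |x.2| ≤ x.2 + 2 := abs_le.mpr ⟨by linarith, by linarith⟩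
      have : max |x.1| |x.2| ≤ (x.1 + 2) + (x.2 + 2) := by
        apply max_le <;> [nlinarith [abs_nonneg x.2]; nlinarith [abs_nonneg x.1]]
      nlinarith
    have hq : (0:ℝ) ≤ (x.1 + 2) * (x.2 + 2) := mul_nonneg (by linarith) (by linarith)
    have hprod1 : (1:ℝ) ≤ (3 + x.1) * (3 + x.2) := by nlinarith
    have hpr : |R| ≤ (3 + x.1) * (3 + x.2) * |R| :=
      le_mul_of_one_le_left (abs_nonneg R) hprod1
    have hmax : max (x.1 + x.2 - R) 0 ≤ (3 + x.1) * (3 + x.2) * (1 + |R|) := by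
      apply max_le
      · nlinarith [le_abs_self R, abs_nonneg R, hq, hpr]
      · positivity
    have hψb : ψ x ≤ C * ((3 + x.1) * (3 + x.2)) ^ d := by
      refine le_trans (hupp x ⟨ha, hb⟩) ?_
      rw [Real.rpow_natCast]
      have hbase : (0:ℝ) ≤ 1 + ‖x‖ := by positivity
      exact mul_le_mul_of_nonneg_left (pow_le_pow_left₀ hbase hn1 d) hC.le
    have hexp : Real.exp (-lam * (x.1 + x.2))
        = Real.exp (-(lam * x.1)) * Real.exp (-(lam * x.2)) := by
      rw [← Real.exp_add]; congr 1; ring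
    calc f x = max (x.1 + x.2 - R) 0 *
          (ψ x * (Real.exp (-(lam * x.1)) * Real.exp (-(lam * x.2)))) := by
          rw [hf]; dsimp only; rw [hexp]
      _ ≤ ((3 + x.1) * (3 + x.2) * (1 + |R|)) *
          ((C * ((3 + x.1) * (3 + x.2)) ^ d) *
            (Real.exp (-(lam * x.1)) * Real.exp (-(lam * x.2)))) := by
          apply mul_le_mul hmax _ (mul_nonneg (hψ0 x ⟨ha, hb⟩) (by positivity)) (by positivity)
          exact mul_le_mul_of_nonneg_right hψb (by positivity)
      _ = G x := by rw [hG]; dsimp only; rw [mul_pow]; ring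
  have hfint : IntegrableOn f P := by
    refine Integrable.mono hGint hfm ?_
    refine (ae_restrict_iff' hPm).mpr (ae_of_all _ fun x hx => ?_)
    rw [Real.norm_eq_abs, Real.norm_eq_abs, abs_of_nonneg (hfnn x hx)]
    exact le_trans (hdom x hx) (le_abs_self _)
  -- the box
  set B : Set (ℝ × ℝ) := Set.Icc (0:ℝ) 1 ×ˢ Set.Icc (R + 1) (R + 2) with hB
  have hBm : MeasurableSet B := measurableSet_Icc.prod measurableSet_Icc
  have hBsub : B ⊆ P := by
    rintro x ⟨hx1, hx2⟩
    exact ⟨le_trans (by norm_num) hx1.1, le_trans (by linarith) hx2.1⟩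
  have hvolB : volume B = 1 := by
    rw [hB, Measure.volume_eq_prod, Measure.prod_prod, Real.volume_Icc, Real.volume_Icc]
    norm_num
  have hBlow : ∀ x ∈ B, C * ((R + 3) ^ d)⁻¹ * Real.exp (-(lam * (R + 3))) ≤ f x := by
    rintro x ⟨hx1, hx2⟩
    have h1 : (0:ℝ) ≤ x.1 := hx1.1
    have h2 : x.1 ≤ 1 := hx1.2
    have h3 : R + 1 ≤ x.2 := hx2.1
    have h4 : x.2 ≤ R + 2 := hx2.2
    have hxP : x ∈ P := hBsub ⟨hx1, hx2⟩
    have hR3 : (0:ℝ) < R + 3 := by linarith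
    have hmax : (1:ℝ) ≤ max (x.1 + x.2 - R) 0 := le_max_of_le_left (by linarith)
    have hnx : 1 + ‖x‖ ≤ R + 3 := by
      rw [hnorm]
      have e1 : |x.1| ≤ 1 := abs_le.mpr ⟨by linarith, h2⟩
      have e2 : |x.2| ≤ R + 2 := abs_le.mpr ⟨by linarith, h4⟩
      have : max |x.1| |x.2| ≤ R + 2 := max_le (by linarith) e2
      linarith
    have hψlb : C * ((R + 3) ^ d)⁻¹ ≤ ψ x := by
      refine le_trans ?_ (hlow x hxP)
      rw [Real.rpow_natCast, mul_inv, inv_inv]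
      have hbase : (0:ℝ) < 1 + ‖x‖ := by positivity
      have : (1 + ‖x‖) ^ d ≤ (R + 3) ^ d := pow_le_pow_left₀ hbase.le hnx d
      have hpow : (0:ℝ) < (1 + ‖x‖) ^ d := by positivity
      exact mul_le_mul_of_nonneg_left (by
        exact inv_anti₀ hpow this) hC.le
    have hexp : Real.exp (-(lam * (R + 3))) ≤ Real.exp (-lam * (x.1 + x.2)) :=
      Real.exp_le_exp.mpr (by nlinarith)
    calc C * ((R + 3) ^ d)⁻¹ * Real.exp (-(lam * (R + 3)))
        = 1 * ((C * ((R + 3) ^ d)⁻¹) * Real.exp (-(lam * (R + 3)))) := by ring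
      _ ≤ max (x.1 + x.2 - R) 0 * (ψ x * Real.exp (-lam * (x.1 + x.2))) := by
          refine mul_le_mul hmax ?_ (by positivity) (le_trans zero_le_one hmax)
          exact mul_le_mul hψlb hexp (Real.exp_pos _).le (hψ0 x hxP)
      _ = f x := by rw [hf]
  have hconst : IntegrableOn
      (fun _ : ℝ × ℝ => C * ((R + 3) ^ d)⁻¹ * Real.exp (-(lam * (R + 3)))) B := by
    exact integrableOn_const (by rw [hvolB]; exact ENNReal.one_ne_top)
  have step1 : C * ((R + 3) ^ d)⁻¹ * Real.exp (-(lam * (R + 3)))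
      = ∫ _ in B, C * ((R + 3) ^ d)⁻¹ * Real.exp (-(lam * (R + 3))) := by
    rw [setIntegral_const, measureReal_def, hvolB]; simp
  have step2 : (∫ _ in B, C * ((R + 3) ^ d)⁻¹ * Real.exp (-(lam * (R + 3))))
      ≤ ∫ x in B, f x :=
    setIntegral_mono_on hconst (hfint.mono_set hBsub) hBm hBlow
  have step3 : ∫ x in B, f x ≤ ∫ x in P, f x := by
    refine setIntegral_mono_set hfint ?_ (HasSubset.Subset.eventuallyLE hBsub)
    exact (ae_restrict_iff' hPm).mpr (ae_of_all _ hfnn)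
  calc C * ((R + 3) ^ d)⁻¹ * Real.exp (-(lam * (R + 3)))
      = ∫ _ in B, C * ((R + 3) ^ d)⁻¹ * Real.exp (-(lam * (R + 3))) := step1
    _ ≤ ∫ x in B, f x := step2
    _ ≤ ∫ x in P, f x := step3

/-- Nonexistence criterion on `ℂ²` via eventual negativity of the Futaki
invariant.  Let `P = [−1,∞)² ⊆ ℝ²`, `λ ∈ (0,1)`, and
`v(x) = q₁(x) e^{−(x₁+x₂)}`, `w(x) = q₂(x) e^{−λ(x₁+x₂)}`, where `q₁, q₂` are
positive continuous functions on `P` bounded above and below by positive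
constants times polynomials (here by `C (1+‖x‖)^d` and `C⁻¹ (1+‖x‖)^{−d}`).
With `f_R(x) = max(x₁+x₂−R, 0)`, there is `R₀` such that for all `R ≥ R₀`,
`2∫_{∂P} f_R v dσ − ∫_P f_R w dx < 0`. -/
theorem futaki_eventually_negative
    (lam : ℝ) (hlam : lam ∈ Set.Ioo (0 : ℝ) 1)
    (q₁ q₂ v w : ℝ × ℝ → ℝ)
    (hq₁cont : ContinuousOn q₁ (Set.Ici (-1 : ℝ) ×ˢ Set.Ici (-1 : ℝ)))
    (hq₂cont : ContinuousOn q₂ (Set.Ici (-1 : ℝ) ×ˢ Set.Ici (-1 : ℝ)))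
    (hbound : ∃ C > (0 : ℝ), ∃ d : ℕ,
      ∀ x ∈ Set.Ici (-1 : ℝ) ×ˢ Set.Ici (-1 : ℝ),
        (C⁻¹ * (1 + ‖x‖) ^ (d : ℝ))⁻¹ ≤ q₁ x ∧ q₁ x ≤ C * (1 + ‖x‖) ^ (d : ℝ) ∧
        (C⁻¹ * (1 + ‖x‖) ^ (d : ℝ))⁻¹ ≤ q₂ x ∧ q₂ x ≤ C * (1 + ‖x‖) ^ (d : ℝ))
    (hv : ∀ x : ℝ × ℝ, v x = q₁ x * Real.exp (-(x.1 + x.2)))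
    (hw : ∀ x : ℝ × ℝ, w x = q₂ x * Real.exp (-lam * (x.1 + x.2))) :
    ∃ R₀ : ℝ, ∀ R ≥ R₀,
      2 * ((∫ t in Set.Ici (-1 : ℝ), max ((-1) + t - R) 0 * v (-1, t)) +
            ∫ t in Set.Ici (-1 : ℝ), max (t + (-1) - R) 0 * v (t, -1)) -
        (∫ x in Set.Ici (-1 : ℝ) ×ˢ Set.Ici (-1 : ℝ),
            max (x.1 + x.2 - R) 0 * w x) < 0 := by
  obtain ⟨C, hC, d, hbd⟩ := hbound
  obtain ⟨hl0, hl1⟩ := hlam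
  set mu : ℝ := (1 + lam) / 2 with hmu
  have hm0 : 0 < mu := by rw [hmu]; linarith
  have hm1 : mu < 1 := by rw [hmu]; linarith
  have hml : 0 < mu - lam := by rw [hmu]; linarith
  -- facts about the boundary restrictions of q₁
  have hmem1 : ∀ t ∈ Set.Ici (-1 : ℝ),
      ((-1 : ℝ), t) ∈ Set.Ici (-1 : ℝ) ×ˢ Set.Ici (-1 : ℝ) :=
    fun t ht => ⟨Set.mem_Ici.mpr le_rfl, ht⟩
  have hmem2 : ∀ t ∈ Set.Ici (-1 : ℝ),
      ((t, (-1 : ℝ))) ∈ Set.Ici (-1 : ℝ) ×ˢ Set.Ici (-1 : ℝ) :=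
    fun t ht => ⟨ht, Set.mem_Ici.mpr le_rfl⟩
  have hnormb : ∀ t ∈ Set.Ici (-1 : ℝ), ∀ s : ℝ, |s| = 1 →
      (1 + max |s| |t|) ≤ 3 + t := by
    intro t ht s hs
    have ht' : (-1:ℝ) ≤ t := ht
    have habs : |t| ≤ 2 + t := abs_le.mpr ⟨by linarith, by linarith⟩
    rw [hs]
    have : max 1 |t| ≤ 2 + t := max_le (by linarith) habs
    linarith
  have hub : ∀ (x : ℝ × ℝ) (t : ℝ), x ∈ Set.Ici (-1 : ℝ) ×ˢ Set.Ici (-1 : ℝ) →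
      (1 + ‖x‖ ≤ 3 + t) → q₁ x ≤ C * (3 + t) ^ d := by
    intro x t hx hle
    refine le_trans (hbd x hx).2.1 ?_
    rw [Real.rpow_natCast]
    exact mul_le_mul_of_nonneg_left (pow_le_pow_left₀ (by positivity) hle d) hC.le
  have hlb : ∀ x ∈ Set.Ici (-1 : ℝ) ×ˢ Set.Ici (-1 : ℝ), 0 ≤ q₁ x := by
    intro x hx
    refine le_trans ?_ (hbd x hx).1
    positivity
  -- boundary bound for φ₁
  have hφ₁m : AEStronglyMeasurable (fun t : ℝ => q₁ (-1, t))
      (volume.restrict (Set.Ici (-1 : ℝ))) := by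
    refine ContinuousOn.aestronglyMeasurable ?_ measurableSet_Ici
    exact hq₁cont.comp (Continuous.continuousOn (by fun_prop)) hmem1
  have hφ₂m : AEStronglyMeasurable (fun t : ℝ => q₁ (t, -1))
      (volume.restrict (Set.Ici (-1 : ℝ))) := by
    refine ContinuousOn.aestronglyMeasurable ?_ measurableSet_Ici
    exact hq₁cont.comp (Continuous.continuousOn (by fun_prop)) hmem2
  have hnorm1 : ∀ t ∈ Set.Ici (-1:ℝ), (1 + ‖((-1:ℝ), t)‖) ≤ 3 + t := by
    intro t ht
    have : ‖((-1:ℝ), t)‖ = max |(-1:ℝ)| |t| := by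
      rw [Prod.norm_def, Real.norm_eq_abs, Real.norm_eq_abs]
    rw [this]
    exact hnormb t ht (-1) (by norm_num)
  have hnorm2 : ∀ t ∈ Set.Ici (-1:ℝ), (1 + ‖(t, (-1:ℝ))‖) ≤ 3 + t := by
    intro t ht
    have h : ‖(t, (-1:ℝ))‖ = max |(-1:ℝ)| |t| := by
      rw [Prod.norm_def, Real.norm_eq_abs, Real.norm_eq_abs, max_comm]
    rw [h]
    exact hnormb t ht (-1) (by norm_num)
  obtain ⟨K₁, hK₁⟩ := boundary_bound C d (fun t => q₁ (-1, t)) hφ₁m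
    (fun t ht => hlb _ (hmem1 t ht))
    (fun t ht => hub _ t (hmem1 t ht) (hnorm1 t ht)) hm0 hm1
  obtain ⟨K₂, hK₂⟩ := boundary_bound C d (fun t => q₁ (t, -1)) hφ₂m
    (fun t ht => hlb _ (hmem2 t ht))
    (fun t ht => hub _ t (hmem2 t ht) (hnorm2 t ht)) hm0 hm1
  have hq₂m : AEStronglyMeasurable q₂
      (volume.restrict (Set.Ici (-1 : ℝ) ×ˢ Set.Ici (-1 : ℝ))) :=
    hq₂cont.aestronglyMeasurable (measurableSet_Ici.prod measurableSet_Ici)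
  have hint := interior_bound lam C hl0 hC d q₂ hq₂m
    (fun x hx => (hbd x hx).2.2.1) (fun x hx => (hbd x hx).2.2.2)
  -- eventual comparison
  have htend : Filter.Tendsto (fun R : ℝ =>
      (2 * (K₁ + K₂) * Real.exp (3 * lam)) * ((3 + R) ^ d * Real.exp (-((mu - lam) * R))))
      Filter.atTop (nhds 0) := by
    simpa using (aux_tendsto d 3 hml).const_mul (2 * (K₁ + K₂) * Real.exp (3 * lam))
  have hev : ∀ᶠ R in Filter.atTop,
      2 * ((∫ t in Set.Ici (-1 : ℝ), max ((-1) + t - R) 0 * v (-1, t)) +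
            ∫ t in Set.Ici (-1 : ℝ), max (t + (-1) - R) 0 * v (t, -1)) -
        (∫ x in Set.Ici (-1 : ℝ) ×ˢ Set.Ici (-1 : ℝ),
            max (x.1 + x.2 - R) 0 * w x) < 0 := by
    filter_upwards [htend.eventually_lt_const hC, Filter.eventually_ge_atTop (0:ℝ)]
      with R hlt hR0
    -- rewrite the three integrals
    have e₁ : (∫ t in Set.Ici (-1 : ℝ), max ((-1) + t - R) 0 * v (-1, t))
        = ∫ t in Set.Ici (-1 : ℝ),
            max (t - 1 - R) 0 * ((fun t => q₁ (-1, t)) t * Real.exp (1 - t)) := by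
      refine integral_congr_ae (Filter.Eventually.of_forall fun t => ?_)
      dsimp only
      rw [hv]
      dsimp only
      rw [show -((-1:ℝ) + t) = 1 - t by ring, show (-1:ℝ) + t - R = t - 1 - R by ring]
    have e₂ : (∫ t in Set.Ici (-1 : ℝ), max (t + (-1) - R) 0 * v (t, -1))
        = ∫ t in Set.Ici (-1 : ℝ),
            max (t - 1 - R) 0 * ((fun t => q₁ (t, -1)) t * Real.exp (1 - t)) := by
      refine integral_congr_ae (Filter.Eventually.of_forall fun t => ?_)
      dsimp only
      rw [hv]
      dsimp only
      rw [show -((t : ℝ) + (-1)) = 1 - t by ring, show (t : ℝ) + (-1) - R = t - 1 - R by ring]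
    have e₃ : (∫ x in Set.Ici (-1 : ℝ) ×ˢ Set.Ici (-1 : ℝ),
            max (x.1 + x.2 - R) 0 * w x)
        = ∫ x in Set.Ici (-1 : ℝ) ×ˢ Set.Ici (-1 : ℝ),
            max (x.1 + x.2 - R) 0 * (q₂ x * Real.exp (-lam * (x.1 + x.2))) := by
      refine integral_congr_ae (Filter.Eventually.of_forall fun x => ?_)
      dsimp only
      rw [hw]
    rw [e₁, e₂, e₃]
    have b₁ := hK₁ R hR0
    have b₂ := hK₂ R hR0
    have bi := hint R hR0
    -- the key comparison
    set T : ℝ := (R + 3) ^ d * Real.exp (lam * (R + 3)) with hT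
    have hTpos : 0 < T := by rw [hT]; positivity
    have key : 2 * (K₁ + K₂) * Real.exp (-(mu * R)) * T
        = (2 * (K₁ + K₂) * Real.exp (3 * lam)) *
            ((3 + R) ^ d * Real.exp (-((mu - lam) * R))) := by
      have hx : Real.exp (-(mu * R)) * Real.exp (lam * (R + 3))
          = Real.exp (3 * lam) * Real.exp (-((mu - lam) * R)) := by
        rw [← Real.exp_add, ← Real.exp_add]; congr 1; ring
      calc 2 * (K₁ + K₂) * Real.exp (-(mu * R)) * T
          = 2 * (K₁ + K₂) * (R + 3) ^ d *
              (Real.exp (-(mu * R)) * Real.exp (lam * (R + 3))) := by rw [hT]; ring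
        _ = 2 * (K₁ + K₂) * (R + 3) ^ d *
              (Real.exp (3 * lam) * Real.exp (-((mu - lam) * R))) := by rw [hx]
        _ = (2 * (K₁ + K₂) * Real.exp (3 * lam)) *
              ((3 + R) ^ d * Real.exp (-((mu - lam) * R))) := by
            rw [show (3 + R : ℝ) = R + 3 by ring]; ring
    have hcmp : 2 * (K₁ + K₂) * Real.exp (-(mu * R))
        < C * ((R + 3) ^ d)⁻¹ * Real.exp (-(lam * (R + 3))) := by
      have h1 : 2 * (K₁ + K₂) * Real.exp (-(mu * R)) < C / T :=
        (lt_div_iff₀ hTpos).mpr (by rw [key]; exact hlt)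
      have h2 : C / T = C * ((R + 3) ^ d)⁻¹ * Real.exp (-(lam * (R + 3))) := by
        rw [hT, Real.exp_neg, div_eq_mul_inv, mul_inv]; ring
      rwa [h2] at h1
    have hexpand : 2 * (K₁ + K₂) * Real.exp (-(mu * R))
        = 2 * (K₁ * Real.exp (-(mu * R))) + 2 * (K₂ * Real.exp (-(mu * R))) := by ring
    linarith
  exact Filter.eventually_atTop.mp hev
end

section
/- Let P = [−1,∞), x₀ ∈ (−1, ∞), and f_{x₀}(x) = max(x₀ − x, 0). Let ṽ be C² positive on P, w̃ continuous with (ṽΘ)'' = −w̃, Θ(−1) = 0, Θ'(−1) = 2, and Θ ≥ 0. Then 2 ṽ(−1) f_{x₀}(−1) − ∫_{−1}^{∞} f_{x₀}(x) w̃(x) dx = ṽ(x₀) Θ(x₀). In particular the Futaki invariant F_{ṽ,w̃}(f_{x₀}) = ṽ(x₀)Θ(x₀). -/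
open MeasureTheory

/-- Futaki invariant of the simple piecewise-linear test functions on
`P = [−1,∞)`: with `f_{x₀}(x) = max(x₀ − x, 0)` and `Θ ≥ 0` solving
`(ṽΘ)'' = −w̃`, `Θ(−1) = 0`, `Θ'(−1) = 2`, one has
`2ṽ(−1) f_{x₀}(−1) − ∫_{−1}^∞ f_{x₀} w̃ dx = ṽ(x₀) Θ(x₀)`,
i.e. `F_{ṽ,w̃}(f_{x₀}) = ṽ(x₀)Θ(x₀)`. -/
theorem futaki_of_simple_test_function
    (v w Θ : ℝ → ℝ) (x₀ : ℝ) (hx₀ : x₀ ∈ Set.Ioi (-1 : ℝ))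
    (hv : ContDiffOn ℝ 2 v (Set.Ici (-1 : ℝ)))
    (hvpos : ∀ x ∈ Set.Ici (-1 : ℝ), 0 < v x)
    (hw : ContinuousOn w (Set.Ici (-1 : ℝ)))
    (y' : ℝ → ℝ)
    (hy' : ∀ x ∈ Set.Ici (-1 : ℝ), HasDerivAt (fun s => v s * Θ s) (y' x) x)
    (hy'' : ∀ x ∈ Set.Ici (-1 : ℝ), HasDerivAt y' (-w x) x)
    (hΘ0 : Θ (-1) = 0)
    (hy'0 : y' (-1) = 2 * v (-1))
    (hΘnonneg : ∀ x ∈ Set.Ici (-1 : ℝ), 0 ≤ Θ x) :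
    2 * v (-1) * max (x₀ - (-1)) 0 -
        (∫ x in Set.Ici (-1 : ℝ), max (x₀ - x) 0 * w x) = v x₀ * Θ x₀ := by
  have hx : (-1 : ℝ) < x₀ := hx₀
  have hle : (-1 : ℝ) ≤ x₀ := le_of_lt hx
  set g : ℝ → ℝ := fun x => max (x₀ - x) 0 * w x with hg
  -- split the integral
  have hgcont : ContinuousOn g (Set.Icc (-1 : ℝ) x₀) :=
    (((continuous_const.sub continuous_id).max continuous_const).continuousOn).mul
      (hw.mono Set.Icc_subset_Ici_self)
  have hIcc : IntegrableOn g (Set.Icc (-1 : ℝ) x₀) :=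
    hgcont.integrableOn_Icc
  have hzero : ∀ x ∈ Set.Ioi x₀, g x = 0 := by
    intro x hxm
    have : x₀ - x ≤ 0 := by simp at hxm; linarith
    simp [hg, max_eq_right this]
  have hIoi : IntegrableOn g (Set.Ioi x₀) :=
    (integrableOn_zero).congr_fun (fun x hxm => (hzero x hxm).symm) measurableSet_Ioi
  have hunion : Set.Icc (-1 : ℝ) x₀ ∪ Set.Ioi x₀ = Set.Ici (-1 : ℝ) := by
    ext x
    simp only [Set.mem_union, Set.mem_Icc, Set.mem_Ioi, Set.mem_Ici]
    constructor
    · rintro (⟨h1, _⟩ | h2)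
      · exact h1
      · linarith
    · intro h
      rcases le_or_gt x x₀ with h' | h'
      · exact Or.inl ⟨h, h'⟩
      · exact Or.inr h'
  have hsplit : (∫ x in Set.Ici (-1 : ℝ), g x) = ∫ x in Set.Icc (-1 : ℝ) x₀, g x := by
    have hdis : Disjoint (Set.Icc (-1 : ℝ) x₀) (Set.Ioi x₀) := by
      rw [Set.disjoint_left]
      intro a ha ha'
      exact absurd ha.2 (not_le.mpr ha')
    rw [← hunion, setIntegral_union hdis measurableSet_Ioi hIcc hIoi]
    rw [setIntegral_eq_zero_of_forall_eq_zero hzero, add_zero]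
  have hinterval : (∫ x in Set.Icc (-1 : ℝ) x₀, g x) = ∫ x in (-1 : ℝ)..x₀, (x₀ - x) * w x := by
    rw [integral_Icc_eq_integral_Ioc, ← intervalIntegral.integral_of_le hle]
    apply intervalIntegral.integral_congr
    intro x hxm
    rw [Set.uIcc_of_le hle] at hxm
    have : (0 : ℝ) ≤ x₀ - x := by linarith [hxm.2]
    simp [hg, max_eq_left this]
  -- integration by parts
  have hsub : Set.uIcc (-1 : ℝ) x₀ ⊆ Set.Ici (-1 : ℝ) := by
    rw [Set.uIcc_of_le hle]; exact Set.Icc_subset_Ici_self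
  have hy'cont : ContinuousOn y' (Set.uIcc (-1 : ℝ) x₀) := fun x hxm =>
    ((hy'' x (hsub hxm)).continuousAt).continuousWithinAt
  have hy'int : IntervalIntegrable y' volume (-1 : ℝ) x₀ :=
    hy'cont.intervalIntegrable
  have hwint : IntervalIntegrable (fun x => -w x) volume (-1 : ℝ) x₀ :=
    ((hw.mono (by rw [Set.uIcc_of_le hle]; exact Set.Icc_subset_Ici_self)).neg).intervalIntegrable
  have hparts : (∫ x in (-1 : ℝ)..x₀, (x₀ - x) * (-w x)) =
      (x₀ - x₀) * y' x₀ - (x₀ - (-1)) * y' (-1) - ∫ x in (-1 : ℝ)..x₀, (-1) * y' x := by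
    apply intervalIntegral.integral_mul_deriv_eq_deriv_mul
      (u' := fun _ => (-1 : ℝ)) (v' := fun x => -w x)
      (fun x hxm => by
        have h := (hasDerivAt_const x x₀).sub (hasDerivAt_id x)
        simp only [zero_sub] at h
        exact h)
      (fun x hxm => hy'' x (hsub hxm))
      intervalIntegrable_const
      hwint
  have hy'integral : (∫ x in (-1 : ℝ)..x₀, y' x) = v x₀ * Θ x₀ - v (-1) * Θ (-1) :=
    intervalIntegral.integral_eq_sub_of_hasDerivAt
      (fun x hxm => hy' x (by rw [Set.uIcc_of_le hle] at hxm; exact hxm.1)) hy'int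
  have key : (∫ x in (-1 : ℝ)..x₀, (x₀ - x) * w x) =
      (x₀ + 1) * (2 * v (-1)) - v x₀ * Θ x₀ := by
    have h1 : (∫ x in (-1 : ℝ)..x₀, (x₀ - x) * w x) =
        -(∫ x in (-1 : ℝ)..x₀, (x₀ - x) * (-w x)) := by
      rw [← intervalIntegral.integral_neg]
      congr 1; ext x; ring
    rw [h1, hparts]
    have h2 : (∫ x in (-1 : ℝ)..x₀, (-1 : ℝ) * y' x) = -(∫ x in (-1 : ℝ)..x₀, y' x) := by
      rw [← intervalIntegral.integral_neg]
      congr 1; ext x; ring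
    rw [h2, hy'integral, hy'0, hΘ0]
    ring
  have hmax : max (x₀ - (-1)) 0 = x₀ + 1 := by
    rw [max_eq_left (by linarith)]; ring
  rw [hmax, hsplit, hinterval, key]
  ring
end
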